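/- arXiv:1404.3416 — 5 statements merged into one kernel-verified Lean document; each statement's English description precedes it below -/
import Mathlib

section
/- An endofunctor of the simplex category is determined, up to natural isomorphism, by the simplicial interval it induces: if T₁, T₂: Δ → Δ are functors such that the functors Δᵒᵖ → 𝓘 sending [n] to Hom_Δ(T₁([n]),[1]) and to Hom_Δ(T₂([n]),[1]) respectively (each hom-set equipped with the pointwise order, morphisms acting by Tᵢ followed by precomposition) are naturally isomorphic, then T₁ and T₂ are naturally isomorphic (hence equal, since Δ has no non-identity isomorphisms). -/
/-!
An isomorphism in `𝓘` is an order isomorphism between finite chains, hence an identity, so a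
natural isomorphism `T₁.op ⋙ F ≅ T₂.op ⋙ F` is an equality of functors. The functor `F` is
injective on objects, and it is faithful: for `f : [m] → [n]`, whether `f k ≥ t` holds is read
off from the number of `k'` with `f k' ≥ t`, which is the value of `F f` at the map `[n] → [1]`
jumping at `t`. Hence `T₁.op = T₂.op`.
-/

open CategoryTheory Simplicial Topology

namespace GES

lemma count_ge (N c : ℕ) :
    ((Finset.univ : Finset (Fin N)).filter (fun k : Fin N => c ≤ (k : ℕ))).card = N - c := by
  by_cases h : c < N
  · have heq : (Finset.univ : Finset (Fin N)).filter (fun k : Fin N => c ≤ (k : ℕ)) =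
        Finset.Ici (⟨c, h⟩ : Fin N) := by
      ext k
      simp [Finset.mem_Ici, Fin.le_def]
    rw [heq, Fin.card_Ici]
  · have heq : (Finset.univ : Finset (Fin N)).filter (fun k : Fin N => c ≤ (k : ℕ)) = ∅ := by
      rw [Finset.filter_eq_empty_iff]
      intro k _
      have := k.isLt
      omega
    rw [heq]
    simp
    omega

lemma count_le (N c : ℕ) :
    ((Finset.univ : Finset (Fin N)).filter (fun k : Fin N => (k : ℕ) ≤ c)).card =
      min (c + 1) N := by
  by_cases h : c < N
  · have heq : (Finset.univ : Finset (Fin N)).filter (fun k : Fin N => (k : ℕ) ≤ c) =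
        Finset.Iic (⟨c, h⟩ : Fin N) := by
      ext k
      simp [Finset.mem_Iic, Fin.le_def]
    rw [heq, Fin.card_Iic]
    show c + 1 = min (c + 1) N
    omega
  · have heq : (Finset.univ : Finset (Fin N)).filter (fun k : Fin N => (k : ℕ) ≤ c) =
        Finset.univ := by
      rw [Finset.filter_eq_self]
      intro k _
      have := k.isLt
      omega
    rw [heq]
    simp
    omega

lemma card_filter_upclosed {M : ℕ} (p : Fin M → Prop) [DecidablePred p]
    (hp : ∀ a b : Fin M, a ≤ b → p a → p b) (k : Fin M) :
    p k ↔ M ≤ (k : ℕ) + (Finset.univ.filter p).card := by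
  constructor
  · intro hk
    have hsub : Finset.Ici k ⊆ Finset.univ.filter p := fun l hl =>
      Finset.mem_filter.mpr ⟨Finset.mem_univ _, hp k l (Finset.mem_Ici.mp hl) hk⟩
    have hcard := Finset.card_le_card hsub
    rw [Fin.card_Ici] at hcard
    have := k.isLt
    omega
  · intro hM
    by_contra hk
    have hsub : Finset.univ.filter p ⊆ Finset.Ioi k := by
      intro l hl
      rw [Finset.mem_Ioi]
      rcases lt_or_ge k l with h | h
      · exact h
      · exact absurd (hp l k h (Finset.mem_filter.mp hl).2) hk
    have hcard := Finset.card_le_card hsub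
    rw [Fin.card_Ioi] at hcard
    have := k.isLt
    omega

lemma card_filter_downclosed {M : ℕ} (p : Fin M → Prop) [DecidablePred p]
    (hp : ∀ a b : Fin M, a ≤ b → p b → p a) (k : Fin M) :
    p k ↔ (k : ℕ) < (Finset.univ.filter p).card := by
  constructor
  · intro hk
    have hsub : Finset.Iic k ⊆ Finset.univ.filter p := fun l hl =>
      Finset.mem_filter.mpr ⟨Finset.mem_univ _, hp l k (Finset.mem_Iic.mp hl) hk⟩
    have hcard := Finset.card_le_card hsub
    rw [Fin.card_Iic] at hcard
    omega
  · intro hM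
    by_contra hk
    have hsub : Finset.univ.filter p ⊆ Finset.Iio k := by
      intro l hl
      rw [Finset.mem_Iio]
      rcases lt_or_ge l k with h | h
      · exact h
      · exact absurd (hp k l h (Finset.mem_filter.mp hl).2) hk
    have hcard := Finset.card_le_card hsub
    rw [Fin.card_Iio] at hcard
    omega

/-- The interval category: the object `IntervalCat.mk l` is the finite linear order
`{0, 1, …, l+1}` (an interval `{m}` with `m = l+1 ≥ 1`); morphisms are order preserving
maps preserving the least and the greatest elements. -/
structure IntervalCat : Type where
  len : ℕ

instance : Category IntervalCat where
  Hom a b := {f : Fin (a.len + 2) →o Fin (b.len + 2) //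
    f 0 = 0 ∧ f (Fin.last (a.len + 1)) = Fin.last (b.len + 1)}
  id a := ⟨OrderHom.id, rfl, rfl⟩
  comp f g := ⟨g.1.comp f.1, by simp [f.2.1, g.2.1], by simp [f.2.2, g.2.2]⟩

/-- The underlying monotone map of `F(f)` for `f : [m] → [n]` in `Δ`: it sends
`i ∈ Hom([n],[1]) ≅ {n+1}` to the element of `Hom([m],[1]) ≅ {m+1}` obtained by
precomposing with `f`, namely `#{k : f(k) ≥ n+1-i}`. -/
def FHom {n m : SimplexCategory} (f : m ⟶ n) : Fin (n.len + 2) →o Fin (m.len + 2) where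
  toFun i :=
    ⟨(Finset.univ.filter (fun k : Fin (m.len + 1) =>
        n.len + 1 ≤ (f.toOrderHom k : ℕ) + (i : ℕ))).card, by
      have := Finset.card_filter_le (Finset.univ : Finset (Fin (m.len + 1)))
        (fun k => n.len + 1 ≤ (f.toOrderHom k : ℕ) + (i : ℕ))
      simp only [Finset.card_univ, Fintype.card_fin] at this
      omega⟩
  monotone' := by
    intro i j hij
    have hij' : (i : ℕ) ≤ j := hij
    refine Fin.mk_le_mk.mpr (Finset.card_le_card ?_)
    intro k hk
    simp only [Finset.mem_filter, Finset.mem_univ, true_and] at hk ⊢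
    omega

theorem FHom_zero {n m : SimplexCategory} (f : m ⟶ n) : FHom f 0 = 0 := by
  apply Fin.ext
  show (Finset.univ.filter (fun k : Fin (m.len + 1) =>
      n.len + 1 ≤ (f.toOrderHom k : ℕ) + ((0 : Fin (n.len + 2)) : ℕ))).card = 0
  rw [Finset.card_eq_zero, Finset.filter_eq_empty_iff]
  intro k _
  have := (f.toOrderHom k).isLt
  simp only [Fin.val_zero]
  omega

theorem FHom_last {n m : SimplexCategory} (f : m ⟶ n) :
    FHom f (Fin.last (n.len + 1)) = Fin.last (m.len + 1) := by
  apply Fin.ext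
  show (Finset.univ.filter (fun k : Fin (m.len + 1) =>
      n.len + 1 ≤ (f.toOrderHom k : ℕ) + ((Fin.last (n.len + 1) : Fin (n.len + 2)) : ℕ))).card = m.len + 1
  rw [Finset.filter_true_of_mem, Finset.card_univ, Fintype.card_fin]
  intro k _
  simp only [Fin.val_last]
  omega

/-- The contravariant functor `F : Δᵒᵖ → 𝓘` sending `[n]` to `Hom_Δ([n],[1])` with the
pointwise order (realized as the interval `{n+1}`, the least element being the constant
map `0` and the greatest the constant map `1`), acting on morphisms by precomposition. -/
def F : SimplexCategoryᵒᵖ ⥤ IntervalCat where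
  obj X := ⟨X.unop.len⟩
  map {X Y} φ := ⟨FHom φ.unop, FHom_zero φ.unop, FHom_last φ.unop⟩
  map_id X := by
    apply Subtype.ext
    apply OrderHom.ext
    funext i
    apply Fin.ext
    show (Finset.univ.filter (fun k : Fin (X.unop.len + 1) =>
        X.unop.len + 1 ≤ ((𝟙 X.unop : _ ⟶ _).toOrderHom k : ℕ) + (i : ℕ))).card = (i : ℕ)
    have hi : (i : ℕ) < X.unop.len + 2 := i.isLt
    rw [Finset.filter_congr (fun k _ => show (X.unop.len + 1 ≤
        ((𝟙 X.unop : _ ⟶ _).toOrderHom k : ℕ) + (i : ℕ)) ↔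
        (X.unop.len + 1 - (i : ℕ) ≤ (k : ℕ)) from by
      rw [SimplexCategory.id_toOrderHom]
      show X.unop.len + 1 ≤ (k : ℕ) + (i : ℕ) ↔ _
      omega)]
    rw [count_ge]
    omega
  map_comp {X Y Z} φ ψ := by
    apply Subtype.ext
    apply OrderHom.ext
    funext i
    apply Fin.ext
    show (Finset.univ.filter (fun k : Fin (Z.unop.len + 1) =>
        X.unop.len + 1 ≤ (((φ ≫ ψ).unop.toOrderHom) k : ℕ) + (i : ℕ))).card =
      (FHom ψ.unop (FHom φ.unop i) : ℕ)
    show _ = (Finset.univ.filter (fun k : Fin (Z.unop.len + 1) =>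
        Y.unop.len + 1 ≤ (ψ.unop.toOrderHom k : ℕ) + ((FHom φ.unop i : Fin _) : ℕ))).card
    refine congrArg Finset.card (Finset.filter_congr fun k _ => ?_)
    have hup : ∀ a b : Fin (Y.unop.len + 1), a ≤ b →
        (fun l : Fin (Y.unop.len + 1) =>
          X.unop.len + 1 ≤ (φ.unop.toOrderHom l : ℕ) + (i : ℕ)) a →
        (fun l : Fin (Y.unop.len + 1) =>
          X.unop.len + 1 ≤ (φ.unop.toOrderHom l : ℕ) + (i : ℕ)) b := by
      intro a b hab ha
      have := φ.unop.toOrderHom.monotone hab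
      simp only at ha ⊢
      have h2 : (φ.unop.toOrderHom a : ℕ) ≤ φ.unop.toOrderHom b := this
      omega
    have key := card_filter_upclosed
      (fun l : Fin (Y.unop.len + 1) =>
        X.unop.len + 1 ≤ (φ.unop.toOrderHom l : ℕ) + (i : ℕ))
      hup (ψ.unop.toOrderHom k)
    show X.unop.len + 1 ≤ (φ.unop.toOrderHom (ψ.unop.toOrderHom k) : ℕ) + (i : ℕ) ↔ _
    exact key

/-- The underlying monotone map of `G(g)` for a morphism `g : {n} → {m}` of intervals:
`G(g)(i) = #(g⁻¹{0,…,i}) - 1`. -/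
def GHom {a b : IntervalCat} (g : a ⟶ b) :
    Fin (b.len + 1) →o Fin (a.len + 1) where
  toFun i :=
    ⟨(Finset.univ.filter (fun j : Fin (a.len + 2) =>
        (g.1 j : ℕ) ≤ (i : ℕ))).card - 1, by
      have hsub : Finset.univ.filter (fun j : Fin (a.len + 2) => (g.1 j : ℕ) ≤ (i : ℕ)) ⊆
          Finset.univ.erase (Fin.last (a.len + 1)) := by
        intro j hj
        simp only [Finset.mem_filter, Finset.mem_univ, true_and] at hj
        refine Finset.mem_erase.mpr ⟨?_, Finset.mem_univ _⟩
        intro e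
        rw [e, g.2.2] at hj
        simp only [Fin.val_last] at hj
        have := i.isLt
        omega
      have hcard := Finset.card_le_card hsub
      rw [Finset.card_erase_of_mem (Finset.mem_univ _), Finset.card_univ] at hcard
      simp only [Fintype.card_fin] at hcard
      omega⟩
  monotone' := by
    intro i j hij
    have hij' : (i : ℕ) ≤ j := hij
    refine Fin.mk_le_mk.mpr (Nat.sub_le_sub_right (Finset.card_le_card ?_) 1)
    intro k hk
    simp only [Finset.mem_filter, Finset.mem_univ, true_and] at hk ⊢
    omega

theorem GHom_card_pos {a b : IntervalCat} (g : a ⟶ b) (i : Fin (b.len + 1)) :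
    0 < (Finset.univ.filter (fun j : Fin (a.len + 2) => (g.1 j : ℕ) ≤ (i : ℕ))).card :=
  Finset.card_pos.mpr ⟨0, Finset.mem_filter.mpr ⟨Finset.mem_univ _, by
    rw [g.2.1]; exact Nat.zero_le _⟩⟩

/-- The contravariant functor `G : 𝓘 → Δ` sending the interval `{m}` to `[m-1]` and a
morphism `g` to the morphism `G(g)` with `G(g)(i) = #(g⁻¹{0,…,i}) - 1`. -/
def G : IntervalCat ⥤ SimplexCategoryᵒᵖ where
  obj a := Opposite.op (SimplexCategory.mk a.len)
  map {a b} g := Quiver.Hom.op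
    (show SimplexCategory.mk b.len ⟶ SimplexCategory.mk a.len from
      SimplexCategory.Hom.mk (GHom g))
  map_id a := by
    apply Quiver.Hom.unop_inj
    apply SimplexCategory.Hom.ext
    apply OrderHom.ext
    funext i
    apply Fin.ext
    show (Finset.univ.filter (fun j : Fin (a.len + 2) =>
        (((𝟙 a : a ⟶ a).1 j : Fin (a.len + 2)) : ℕ) ≤ (i : ℕ))).card - 1 = (i : ℕ)
    have hi : (i : ℕ) < a.len + 1 := i.isLt
    rw [Finset.filter_congr (fun j _ => show ((((𝟙 a : a ⟶ a).1 j : Fin (a.len + 2)) : ℕ)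
        ≤ (i : ℕ)) ↔ ((j : ℕ) ≤ (i : ℕ)) from Iff.rfl)]
    rw [count_le]
    omega
  map_comp {a b c} g h := by
    apply Quiver.Hom.unop_inj
    apply SimplexCategory.Hom.ext
    apply OrderHom.ext
    funext i
    apply Fin.ext
    have hi : (i : ℕ) < c.len + 1 := i.isLt
    show (Finset.univ.filter (fun j : Fin (a.len + 2) =>
        ((h.1 (g.1 j) : Fin (c.len + 2)) : ℕ) ≤ (i : ℕ))).card - 1 =
      (GHom g (GHom h i) : ℕ)
    show _ = (Finset.univ.filter (fun j : Fin (a.len + 2) =>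
        (g.1 j : ℕ) ≤ ((GHom h i : Fin (b.len + 1)) : ℕ))).card - 1
    have hdown : ∀ x y : Fin (b.len + 2), x ≤ y →
        (fun l : Fin (b.len + 2) => ((h.1 l : Fin (c.len + 2)) : ℕ) ≤ (i : ℕ)) y →
        (fun l : Fin (b.len + 2) => ((h.1 l : Fin (c.len + 2)) : ℕ) ≤ (i : ℕ)) x := by
      intro x y hxy hy
      have h2 : (h.1 x : ℕ) ≤ h.1 y := h.1.monotone hxy
      simp only at hy ⊢
      omega
    have hpos := GHom_card_pos h i
    have hcards : (Finset.univ.filter (fun j : Fin (a.len + 2) =>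
        ((h.1 (g.1 j) : Fin (c.len + 2)) : ℕ) ≤ (i : ℕ))).card =
        (Finset.univ.filter (fun j : Fin (a.len + 2) =>
        (g.1 j : ℕ) ≤ ((GHom h i : Fin (b.len + 1)) : ℕ))).card := by
      refine congrArg Finset.card (Finset.filter_congr fun j _ => ?_)
      have key := card_filter_downclosed
        (fun l : Fin (b.len + 2) => ((h.1 l : Fin (c.len + 2)) : ℕ) ≤ (i : ℕ))
        hdown (g.1 j)
      simp only at key
      show ((h.1 (g.1 j) : Fin (c.len + 2)) : ℕ) ≤ (i : ℕ) ↔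
        (g.1 j : ℕ) ≤ ((GHom h i : Fin (b.len + 1)) : ℕ)
      rw [key]
      show _ ↔ (g.1 j : ℕ) ≤ (Finset.univ.filter (fun l : Fin (b.len + 2) =>
        ((h.1 l : Fin (c.len + 2)) : ℕ) ≤ (i : ℕ))).card - 1
      omega
    rw [hcards]

end GES

namespace CategoryTheory.Functor

variable {C D E : Type*} [Category C] [Category D] [Category E]

lemma eq_of_comp_eq_of_faithful {A B : C ⥤ D} (H : D ⥤ E) [H.Faithful]
    (hH : Function.Injective H.obj) (h : A ⋙ H = B ⋙ H) : A = B :=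
  Functor.ext (fun X => hH (congrArg (·.obj X) h)) fun X Y f =>
    H.map_injective (by simpa [eqToHom_map] using Functor.congr_hom h f)

end CategoryTheory.Functor

namespace GES

lemma le_add_FHom_iff {m n : SimplexCategory} (f : m ⟶ n) (k : Fin (m.len + 1))
    (j : Fin (n.len + 2)) :
    n.len + 1 ≤ (f.toOrderHom k : ℕ) + j ↔ m.len + 1 ≤ (k : ℕ) + FHom f j :=
  card_filter_upclosed (fun k' => n.len + 1 ≤ (f.toOrderHom k' : ℕ) + j)
    (fun _ _ hab ha => ha.trans (Nat.add_le_add_right (f.toOrderHom.monotone hab) _)) k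

lemma FHom_injective (m n : SimplexCategory) : Function.Injective (@FHom n m) := by
  intro f g hfg
  refine SimplexCategory.Hom.ext' _ _ (OrderHom.ext _ _ (funext fun k => Fin.ext ?_))
  have hiff : ∀ j : Fin (n.len + 2),
      n.len + 1 ≤ (f.toOrderHom k : ℕ) + j ↔ n.len + 1 ≤ (g.toOrderHom k : ℕ) + j := by
    intro j
    rw [le_add_FHom_iff, le_add_FHom_iff, hfg]
  have hf := (f.toOrderHom k).isLt
  have hg := (g.toOrderHom k).isLt
  have h₁ := hiff ⟨n.len + 1 - f.toOrderHom k, by omega⟩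
  have h₂ := hiff ⟨n.len + 1 - g.toOrderHom k, by omega⟩
  simp only at h₁ h₂
  omega

instance : F.Faithful where
  map_injective h := Quiver.Hom.unop_inj (FHom_injective _ _ (congrArg Subtype.val h))

lemma F_obj_injective : Function.Injective F.obj := fun _ _ h =>
  Opposite.unop_injective (SimplexCategory.ext (congrArg IntervalCat.len h))

namespace IntervalCat

variable {a b : IntervalCat}

def orderIsoOfIso (e : a ≅ b) : Fin (a.len + 2) ≃o Fin (b.len + 2) :=
  OrderIso.ofHomInv e.hom.1 e.inv.1 (congrArg Subtype.val e.inv_hom_id)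
    (congrArg Subtype.val e.hom_inv_id)

lemma eq_of_iso (e : a ≅ b) : a = b := by
  have hcard := Fintype.card_congr (orderIsoOfIso e).toEquiv
  simp only [Fintype.card_fin, Nat.add_right_cancel_iff] at hcard
  cases a
  cases b
  congr

lemma iso_hom_eq_eqToHom (e : a ≅ b) : e.hom = eqToHom (eq_of_iso e) := by
  obtain rfl := eq_of_iso e
  refine Subtype.ext (OrderHom.ext _ _ (funext fun x => ?_))
  exact DFunLike.congr_fun (Subsingleton.elim (orderIsoOfIso e) (OrderIso.refl _)) x

end IntervalCat

/-- An endofunctor of the simplex category is determined by the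
simplicial interval it induces: if the functors `Δᵒᵖ ⥤ 𝓘` sending `[n]` to
`Hom_Δ(Tᵢ([n]),[1])` (with the pointwise order, morphisms acting by `Tᵢ` followed by
precomposition), i.e. `Tᵢ.op ⋙ F`, are naturally isomorphic, then `T₁ = T₂`. -/
theorem endofunctor_determined_by_simplicial_interval
    (T₁ T₂ : SimplexCategory ⥤ SimplexCategory)
    (h : Nonempty (T₁.op ⋙ F ≅ T₂.op ⋙ F)) :
    T₁ = T₂ := by
  obtain ⟨e⟩ := h
  have hcomp : T₁.op ⋙ F = T₂.op ⋙ F :=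
    Functor.ext_of_iso e (fun X => IntervalCat.eq_of_iso (e.app X))
      (fun X => IntervalCat.iso_hom_eq_eqToHom (e.app X))
  exact congrArg Functor.unop (Functor.eq_of_comp_eq_of_faithful F F_obj_injective hcomp)
end GES
end

section
/- For any endofunctors T₁, T₂ of the simplex category Δ, the simplicial set (T₁+T₂)*(Δ¹) is isomorphic to the wedge of T₁*(Δ¹) and T₂*(Δ¹): namely, to the pushout of the two maps Δ⁰ → T₁*(Δ¹) and Δ⁰ → T₂*(Δ¹), where the first picks out the vertex of T₁*(Δ¹) given by the constant map at 0 in Hom_Δ(T₁([0]),[1]) and the second picks out the vertex of T₂*(Δ¹) given by the constant map at 1 in Hom_Δ(T₂([0]),[1]). -/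
open CategoryTheory Simplicial Topology

universe u

namespace GES

def concatMap {n₁ n₂ m₁ m₂ : ℕ} (f : Fin (n₁ + 1) →o Fin (n₂ + 1))
    (g : Fin (m₁ + 1) →o Fin (m₂ + 1)) :
    Fin (n₁ + m₁ + 2) →o Fin (n₂ + m₂ + 2) where
  toFun k :=
    if h : (k : ℕ) ≤ n₁ then
      ⟨(f ⟨(k : ℕ), by omega⟩ : ℕ), by
        have := (f ⟨(k : ℕ), by omega⟩).isLt; omega⟩
    else
      ⟨n₂ + 1 + (g ⟨(k : ℕ) - n₁ - 1, by have := k.isLt; omega⟩ : ℕ), by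
        have := (g ⟨(k : ℕ) - n₁ - 1, by have := k.isLt; omega⟩).isLt; omega⟩
  monotone' := by
    intro a b hab
    have hab' : (a : ℕ) ≤ (b : ℕ) := hab
    dsimp only
    by_cases ha : (a : ℕ) ≤ n₁ <;> by_cases hb : (b : ℕ) ≤ n₁
    · rw [dif_pos ha, dif_pos hb]
      exact Fin.mk_le_mk.mpr (f.monotone (show (⟨(a : ℕ), by omega⟩ : Fin (n₁ + 1)) ≤
        ⟨(b : ℕ), by omega⟩ from Fin.mk_le_mk.mpr hab'))
    · rw [dif_pos ha, dif_neg hb]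
      refine Fin.mk_le_mk.mpr ?_
      have := (f ⟨(a : ℕ), by omega⟩).isLt
      omega
    · omega
    · rw [dif_neg ha, dif_neg hb]
      refine Fin.mk_le_mk.mpr ?_
      have := g.monotone (show (⟨(a : ℕ) - n₁ - 1, by have := a.isLt; omega⟩ : Fin (m₁ + 1)) ≤
        ⟨(b : ℕ) - n₁ - 1, by have := b.isLt; omega⟩ from Fin.mk_le_mk.mpr (by omega))
      omega

theorem concatMap_apply_of_le {n₁ n₂ m₁ m₂ : ℕ} (f : Fin (n₁ + 1) →o Fin (n₂ + 1))
    (g : Fin (m₁ + 1) →o Fin (m₂ + 1)) (k : Fin (n₁ + m₁ + 2)) (h : (k : ℕ) ≤ n₁) :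
    (concatMap f g k : ℕ) = f ⟨(k : ℕ), by omega⟩ := by
  show ((dite _ _ _ : Fin _) : ℕ) = _
  rw [dif_pos h]

theorem concatMap_apply_of_gt {n₁ n₂ m₁ m₂ : ℕ} (f : Fin (n₁ + 1) →o Fin (n₂ + 1))
    (g : Fin (m₁ + 1) →o Fin (m₂ + 1)) (k : Fin (n₁ + m₁ + 2)) (h : ¬ (k : ℕ) ≤ n₁) :
    (concatMap f g k : ℕ) = n₂ + 1 + g ⟨(k : ℕ) - n₁ - 1, by have := k.isLt; omega⟩ := by
  simp only [concatMap]
  exact congrArg Fin.val (dif_neg h)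

theorem concatMap_id {n m : ℕ} :
    concatMap (OrderHom.id (α := Fin (n + 1))) (OrderHom.id (α := Fin (m + 1))) =
      OrderHom.id := by
  ext k
  by_cases h : (k : ℕ) ≤ n
  · rw [concatMap_apply_of_le _ _ _ h]; rfl
  · rw [concatMap_apply_of_gt _ _ _ h]
    have := k.isLt
    show n + 1 + ((k : ℕ) - n - 1) = (k : ℕ)
    omega

theorem concatMap_comp {n₁ n₂ n₃ m₁ m₂ m₃ : ℕ}
    (f₁ : Fin (n₁ + 1) →o Fin (n₂ + 1)) (f₂ : Fin (n₂ + 1) →o Fin (n₃ + 1))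
    (g₁ : Fin (m₁ + 1) →o Fin (m₂ + 1)) (g₂ : Fin (m₂ + 1) →o Fin (m₃ + 1)) :
    concatMap (f₂.comp f₁) (g₂.comp g₁) = (concatMap f₂ g₂).comp (concatMap f₁ g₁) := by
  ext k
  have hk := k.isLt
  show (concatMap (f₂.comp f₁) (g₂.comp g₁) k : ℕ) =
    (concatMap f₂ g₂ (concatMap f₁ g₁ k) : ℕ)
  by_cases h : (k : ℕ) ≤ n₁
  · have e1 := concatMap_apply_of_le (f₂.comp f₁) (g₂.comp g₁) k h
    have e2 := concatMap_apply_of_le f₁ g₁ k h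
    have h2 : ((concatMap f₁ g₁ k) : ℕ) ≤ n₂ := by
      have := (f₁ ⟨(k : ℕ), by omega⟩).isLt; omega
    have e3 := concatMap_apply_of_le f₂ g₂ (concatMap f₁ g₁ k) h2
    simp only [OrderHom.comp_coe, Function.comp_apply] at e1
    have e4 : (f₂ (⟨((concatMap f₁ g₁ k) : ℕ), by omega⟩ : Fin (n₂ + 1)) : ℕ) =
        f₂ (f₁ ⟨(k : ℕ), by omega⟩) := congrArg (Fin.val ∘ f₂) (Fin.ext e2)
    omega
  · have e1 := concatMap_apply_of_gt (f₂.comp f₁) (g₂.comp g₁) k h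
    have e2 := concatMap_apply_of_gt f₁ g₁ k h
    have h2 : ¬ ((concatMap f₁ g₁ k) : ℕ) ≤ n₂ := by omega
    have e3 := concatMap_apply_of_gt f₂ g₂ (concatMap f₁ g₁ k) h2
    simp only [OrderHom.comp_coe, Function.comp_apply] at e1
    have e4 : (g₂ (⟨((concatMap f₁ g₁ k) : ℕ) - n₂ - 1,
          by have := (concatMap f₁ g₁ k).isLt; omega⟩ : Fin (m₂ + 1)) : ℕ) =
        g₂ (g₁ ⟨(k : ℕ) - n₁ - 1, by omega⟩) := congrArg (Fin.val ∘ g₂) (Fin.ext (by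
          show ((concatMap f₁ g₁ k) : ℕ) - n₂ - 1 = _
          omega))
    omega

/-- The sum (concatenation) of two endofunctors of the simplex category. -/
def sumFunctor (T₁ T₂ : SimplexCategory ⥤ SimplexCategory) :
    SimplexCategory ⥤ SimplexCategory where
  obj X := SimplexCategory.mk ((T₁.obj X).len + (T₂.obj X).len + 1)
  map {X Y} f := SimplexCategory.Hom.mk (concatMap (T₁.map f).toOrderHom (T₂.map f).toOrderHom)
  map_id X := by
    apply SimplexCategory.Hom.ext
    simp only [SimplexCategory.Hom.toOrderHom_mk, T₁.map_id, T₂.map_id,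
      SimplexCategory.id_toOrderHom]
    exact concatMap_id
  map_comp {X Y Z} f g := by
    apply SimplexCategory.Hom.ext
    simp only [SimplexCategory.Hom.toOrderHom_mk, T₁.map_comp, T₂.map_comp,
      SimplexCategory.comp_toOrderHom]
    exact concatMap_comp _ _ _ _

/-- The endofunctor `T*` on simplicial sets induced by an endofunctor `T` of the simplex
category: `T*(X) = X ∘ Tᵒᵖ`. -/
def star (T : SimplexCategory ⥤ SimplexCategory) (X : SSet) : SSet := T.op ⋙ X

/-- The vertex of `T*(Δ¹)` given by the constant map at `i ∈ {0,1}` in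
`Hom_Δ(T([0]),[1])`, as a map `Δ[0] ⟶ T*(Δ¹)`. -/
def vertex (T : SimplexCategory ⥤ SimplexCategory) (i : Fin 2) :
    Δ[0] ⟶ star T Δ[1] :=
  (SSet.yonedaEquiv (X := star T Δ[1]) (n := SimplexCategory.mk 0)).symm
    ((SSet.stdSimplex.objEquiv (n := SimplexCategory.mk 1)
        (m := Opposite.op (T.obj (SimplexCategory.mk 0)))).symm
      (SimplexCategory.const (T.obj (SimplexCategory.mk 0)) (SimplexCategory.mk 1) i))

/-! A `k`-simplex of `T*(Δ¹)` is a monotone map `T([k]) → [1]`. A monotone map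
`h : [a] ∗ [b] → [1]` either vanishes at the last vertex of `[a]`, and then it vanishes on all
of `[a]` and is determined by its restriction to `[b]`, or it equals `1` there, and then it is `1`
on all of `[b]` and is determined by its restriction to `[a]`. Both alternatives meet only in the
map that is `0` on `[a]` and `1` on `[b]`, the glued vertex of the wedge. This exhibits
`(T₁+T₂)*(Δ¹)` levelwise as the pushout of sets, naturally in `[k]`, and pushouts of simplicial
sets are computed levelwise. -/

section FinTwo

variable {n m : ℕ}

def appendOnes (f : Fin (n + 1) →o Fin 2) : Fin (n + m + 2) →o Fin 2 where
  toFun k := if h : (k : ℕ) ≤ n then f ⟨k, by omega⟩ else 1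
  monotone' a b hab := by
    have hab : (a : ℕ) ≤ b := hab
    dsimp only
    split_ifs
    · exact f.monotone (Fin.mk_le_mk.mpr hab)
    · exact Fin.le_last _
    · omega
    · exact le_rfl

def prependZeros (g : Fin (m + 1) →o Fin 2) : Fin (n + m + 2) →o Fin 2 where
  toFun k := if (k : ℕ) ≤ n then 0 else g ⟨k - n - 1, by omega⟩
  monotone' a b hab := by
    have hab : (a : ℕ) ≤ b := hab
    dsimp only
    split_ifs
    · exact le_rfl
    · exact Fin.zero_le _
    · omega
    · exact g.monotone (Fin.mk_le_mk.mpr (by omega))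

def restrictLeft (h : Fin (n + m + 2) →o Fin 2) : Fin (n + 1) →o Fin 2 where
  toFun j := h ⟨j, by omega⟩
  monotone' _ _ hab := h.monotone (Fin.mk_le_mk.mpr hab)

def restrictRight (h : Fin (n + m + 2) →o Fin 2) : Fin (m + 1) →o Fin 2 where
  toFun j := h ⟨n + 1 + j, by omega⟩
  monotone' _ _ hab := h.monotone (Fin.mk_le_mk.mpr (by simpa using hab))

@[simp]
theorem appendOnes_apply (f : Fin (n + 1) →o Fin 2) (k : Fin (n + m + 2)) :
    appendOnes f k = if h : (k : ℕ) ≤ n then f ⟨k, by omega⟩ else 1 :=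
  rfl

@[simp]
theorem prependZeros_apply (g : Fin (m + 1) →o Fin 2) (k : Fin (n + m + 2)) :
    prependZeros g k = if (k : ℕ) ≤ n then 0 else g ⟨k - n - 1, by omega⟩ :=
  rfl

@[simp]
theorem restrictLeft_apply (h : Fin (n + m + 2) →o Fin 2) (j : Fin (n + 1)) :
    restrictLeft h j = h ⟨j, by omega⟩ :=
  rfl

@[simp]
theorem restrictRight_apply (h : Fin (n + m + 2) →o Fin 2) (j : Fin (m + 1)) :
    restrictRight h j = h ⟨n + 1 + j, by omega⟩ :=
  rfl

@[simp]
theorem restrictLeft_appendOnes (f : Fin (n + 1) →o Fin 2) :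
    restrictLeft (appendOnes (m := m) f) = f := by
  ext j
  simp [j.is_le]

@[simp]
theorem restrictRight_prependZeros (g : Fin (m + 1) →o Fin 2) :
    restrictRight (prependZeros (n := n) g) = g := by
  refine OrderHom.ext _ _ (funext fun j => ?_)
  simp only [restrictRight_apply, prependZeros_apply, if_neg (show ¬n + 1 + (j : ℕ) ≤ n by omega)]
  congr
  omega

@[simp]
theorem restrictLeft_prependZeros (g : Fin (m + 1) →o Fin 2) :
    restrictLeft (prependZeros (n := n) g) = OrderHom.const _ 0 := by
  ext j
  simp [j.is_le]

@[simp]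
theorem restrictRight_appendOnes (f : Fin (n + 1) →o Fin 2) :
    restrictRight (appendOnes (m := m) f) = OrderHom.const _ 1 := by
  refine OrderHom.ext _ _ (funext fun j => ?_)
  simp only [restrictRight_apply, appendOnes_apply, dif_neg (show ¬n + 1 + (j : ℕ) ≤ n by omega)]
  rfl

theorem appendOnes_injective : Function.Injective (appendOnes (n := n) (m := m)) :=
  Function.LeftInverse.injective restrictLeft_appendOnes

theorem prependZeros_injective : Function.Injective (prependZeros (n := n) (m := m)) :=
  Function.LeftInverse.injective restrictRight_prependZeros

theorem appendOnes_eq_prependZeros_iff (f : Fin (n + 1) →o Fin 2) (g : Fin (m + 1) →o Fin 2) :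
    appendOnes f = prependZeros g ↔ f = OrderHom.const _ 0 ∧ g = OrderHom.const _ 1 := by
  constructor
  · intro h
    exact ⟨by simpa using congrArg restrictLeft h, by simpa using congrArg restrictRight h.symm⟩
  · rintro ⟨rfl, rfl⟩
    refine OrderHom.ext _ _ (funext fun k => ?_)
    simp only [appendOnes_apply, prependZeros_apply]
    split_ifs <;> rfl

theorem eq_prependZeros_restrictRight (h : Fin (n + m + 2) →o Fin 2) (h0 : h ⟨n, by omega⟩ = 0) :
    h = prependZeros (restrictRight h) := by
  refine OrderHom.ext _ _ (funext fun k => ?_)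
  simp only [prependZeros_apply, restrictRight_apply]
  split_ifs with hk
  · simpa [h0] using h.monotone (Fin.mk_le_mk.mpr hk : k ≤ ⟨n, by omega⟩)
  · exact congrArg h (Fin.ext (by simp only; omega))

theorem eq_appendOnes_restrictLeft (h : Fin (n + m + 2) →o Fin 2) (h1 : h ⟨n, by omega⟩ = 1) :
    h = appendOnes (restrictLeft h) := by
  refine OrderHom.ext _ _ (funext fun k => ?_)
  simp only [appendOnes_apply, restrictLeft_apply]
  split_ifs with hk
  · rfl
  · have := h.monotone (Fin.mk_le_mk.mpr (by omega) : (⟨n, by omega⟩ : Fin (n + m + 2)) ≤ k)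
    exact le_antisymm (Fin.le_last _) (h1 ▸ this)

theorem mem_range_appendOnes_or_prependZeros (h : Fin (n + m + 2) →o Fin 2) :
    h ∈ Set.range appendOnes ∨ h ∈ Set.range prependZeros := by
  rcases Fin.exists_fin_two.mp ⟨h ⟨n, by omega⟩, rfl⟩ with h0 | h1
  · exact .inr ⟨_, (eq_prependZeros_restrictRight h h0).symm⟩
  · exact .inl ⟨_, (eq_appendOnes_restrictLeft h h1).symm⟩

end FinTwo

section Concat

variable {n₁ n₂ m₁ m₂ : ℕ} (a : Fin (n₁ + 1) →o Fin (n₂ + 1)) (b : Fin (m₁ + 1) →o Fin (m₂ + 1))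

theorem appendOnes_comp_concatMap (f : Fin (n₂ + 1) →o Fin 2) :
    (appendOnes (m := m₂) f).comp (concatMap a b) = appendOnes (f.comp a) := by
  refine OrderHom.ext _ _ (funext fun k => ?_)
  simp only [OrderHom.comp_coe, Function.comp_apply, appendOnes_apply]
  by_cases hk : (k : ℕ) ≤ n₁
  · have e := concatMap_apply_of_le a b k hk
    rw [dif_pos (by have := (a ⟨k, by omega⟩).isLt; omega), dif_pos hk]
    exact congrArg f (Fin.ext e)
  · have e := concatMap_apply_of_gt a b k hk
    rw [dif_neg (by omega), dif_neg hk]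

theorem prependZeros_comp_concatMap (g : Fin (m₂ + 1) →o Fin 2) :
    (prependZeros (n := n₂) g).comp (concatMap a b) = prependZeros (g.comp b) := by
  refine OrderHom.ext _ _ (funext fun k => ?_)
  simp only [OrderHom.comp_coe, Function.comp_apply, prependZeros_apply]
  by_cases hk : (k : ℕ) ≤ n₁
  · have e := concatMap_apply_of_le a b k hk
    rw [if_pos (by have := (a ⟨k, by omega⟩).isLt; omega), if_pos hk]
  · have e := concatMap_apply_of_gt a b k hk
    rw [if_neg (by omega), if_neg hk]
    exact congrArg g (Fin.ext (by simp only; omega))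

end Concat

section Wedge

open Limits

def simplexEquiv (T : SimplexCategory ⥤ SimplexCategory) (k : SimplexCategoryᵒᵖ) :
    (star.{u} T Δ[1]).obj k ≃ (Fin ((T.obj k.unop).len + 1) →o Fin 2) :=
  SSet.stdSimplex.objEquiv.trans SimplexCategory.homEquivOrderHom

variable (T₁ T₂ : SimplexCategory ⥤ SimplexCategory)

def starSumInl : star.{u} T₁ Δ[1] ⟶ star (sumFunctor T₁ T₂) Δ[1] where
  app k := TypeCat.ofHom fun x => (simplexEquiv _ k).symm (appendOnes (simplexEquiv T₁ k x))
  naturality _ k' α := by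
    ext x
    exact congrArg (simplexEquiv _ k').symm (appendOnes_comp_concatMap _ _ _).symm

def starSumInr : star.{u} T₂ Δ[1] ⟶ star (sumFunctor T₁ T₂) Δ[1] where
  app k := TypeCat.ofHom fun x => (simplexEquiv _ k).symm (prependZeros (simplexEquiv T₂ k x))
  naturality _ k' α := by
    ext x
    exact congrArg (simplexEquiv _ k').symm (prependZeros_comp_concatMap _ _ _).symm

variable (k : SimplexCategoryᵒᵖ)

@[simp]
theorem simplexEquiv_starSumInl_app (x : (star.{u} T₁ Δ[1]).obj k) :
    simplexEquiv _ k ((starSumInl T₁ T₂).app k x) = appendOnes (simplexEquiv T₁ k x) :=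
  Equiv.apply_symm_apply _ _

@[simp]
theorem simplexEquiv_starSumInr_app (x : (star.{u} T₂ Δ[1]).obj k) :
    simplexEquiv _ k ((starSumInr T₁ T₂).app k x) = prependZeros (simplexEquiv T₂ k x) :=
  Equiv.apply_symm_apply _ _

theorem vertex_comp_starSumInl :
    vertex.{u} T₁ 0 ≫ starSumInl T₁ T₂ = vertex T₂ 1 ≫ starSumInr T₁ T₂ := by
  ext k x
  exact congrArg (simplexEquiv _ k).symm ((appendOnes_eq_prependZeros_iff _ _).mpr ⟨rfl, rfl⟩)

theorem starSumInl_app_injective : Function.Injective ((starSumInl.{u} T₁ T₂).app k) :=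
  (simplexEquiv _ k).symm.injective.comp (appendOnes_injective.comp (simplexEquiv T₁ k).injective)

theorem starSumInr_app_injective : Function.Injective ((starSumInr.{u} T₁ T₂).app k) :=
  (simplexEquiv _ k).symm.injective.comp (prependZeros_injective.comp (simplexEquiv T₂ k).injective)

theorem range_starSumInl_app_union_range_starSumInr_app :
    Set.range ((starSumInl.{u} T₁ T₂).app k) ∪ Set.range ((starSumInr T₁ T₂).app k) =
      Set.univ := by
  refine Set.eq_univ_of_forall fun x => ?_
  rcases mem_range_appendOnes_or_prependZeros (simplexEquiv _ k x) with ⟨f, hf⟩ | ⟨g, hg⟩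
  · exact .inl ⟨(simplexEquiv T₁ k).symm f, (simplexEquiv _ k).injective (by
      rw [simplexEquiv_starSumInl_app, Equiv.apply_symm_apply]; exact hf)⟩
  · exact .inr ⟨(simplexEquiv T₂ k).symm g, (simplexEquiv _ k).injective (by
      rw [simplexEquiv_starSumInr_app, Equiv.apply_symm_apply]; exact hg)⟩

theorem isPullback_app :
    IsPullback ((vertex.{u} T₁ 0).app k) ((vertex T₂ 1).app k) ((starSumInl T₁ T₂).app k)
      ((starSumInr T₁ T₂).app k) := by
  have : Subsingleton ((Δ[0] : SSet.{u}).obj k) := SSet.stdSimplex.objEquiv.subsingleton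
  refine (Types.isPullback_iff _ _ _ _).mpr
    ⟨NatTrans.congr_app (vertex_comp_starSumInl T₁ T₂) k, fun x y _ => Subsingleton.elim x y,
      fun x y h => ?_⟩
  obtain ⟨hx, hy⟩ := (appendOnes_eq_prependZeros_iff _ _).mp (congrArg (simplexEquiv _ k) h)
  exact ⟨SSet.stdSimplex.const 0 0 k, (simplexEquiv T₁ k).injective hx.symm,
    (simplexEquiv T₂ k).injective hy.symm⟩

theorem isPushout_app :
    IsPushout ((vertex.{u} T₁ 0).app k) ((vertex T₂ 1).app k) ((starSumInl T₁ T₂).app k)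
      ((starSumInr T₁ T₂).app k) :=
  have : Mono ((starSumInl.{u} T₁ T₂).app k) :=
    (mono_iff_injective _).mpr (starSumInl_app_injective T₁ T₂ k)
  Types.isPushout_of_isPullback_of_mono' (isPullback_app T₁ T₂ k)
    (range_starSumInl_app_union_range_starSumInr_app T₁ T₂ k)
    (fun _ _ _ _ h => starSumInr_app_injective T₁ T₂ k h)

theorem isPushout_starSumInl_starSumInr :
    IsPushout (vertex.{u} T₁ 0) (vertex T₂ 1) (starSumInl T₁ T₂) (starSumInr T₁ T₂) :=
  IsPushout.of_forall_isPushout_app (isPushout_app T₁ T₂)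

end Wedge

/-- For endofunctors `T₁, T₂` of the simplex category, the simplicial
set `(T₁+T₂)*(Δ¹)` is isomorphic to the wedge of `T₁*(Δ¹)` and `T₂*(Δ¹)`: the pushout
of the map `Δ⁰ → T₁*(Δ¹)` picking out the vertex given by the constant map at `0` in
`Hom_Δ(T₁([0]),[1])` and the map `Δ⁰ → T₂*(Δ¹)` picking out the vertex given by the
constant map at `1` in `Hom_Δ(T₂([0]),[1])`. -/
theorem star_sumFunctor_iso_wedge (T₁ T₂ : SimplexCategory ⥤ SimplexCategory) :
    Nonempty (star.{u} (sumFunctor T₁ T₂) Δ[1] ≅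
      Limits.pushout (vertex T₁ 0) (vertex T₂ 1)) :=
  ⟨(isPushout_starSumInl_starSumInr T₁ T₂).isoPushout⟩

end GES
end

section
/- Let T be an endofunctor of the simplex category Δ that is not a constant functor (equivalently, T is not constant on objects: there exist k, l with T([k]) ≠ T([l])). Then for every k ≥ 0, writing T([k]) = [T(k)], one has k ≤ T(k); that is, the number of elements of T([k]) is at least k + 1. -/
/-!
If `T (δ 0) ≠ T (δ 1)` for the two vertices `⦋0⦌ ⟶ ⦋1⦌`, pick a point `e` of `T ⦋0⦌` separating
them. For `a < b` in `⦋k⦌` the edge `⦋1⦌ ⟶ ⦋k⦌` from `a` to `b` has a retraction, so its image under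
`T` is injective and `T a` and `T b` differ at `e`: the `k + 1` vertices of `⦋k⦌` give `k + 1`
distinct points of `T ⦋k⦌`.

If `T (δ 0) = T (δ 1)`, then `T` identifies all vertices of every `⦋n⦌`. Embed `⦋n⦌` as either half
of `⦋2n+1⦌`, with retractions `r₀, r₁` collapsing the other half; then `T` sends both cross
composites to `T c` for `c` a constant self-map of `⦋n⦌`, and a monotonicity argument forces
`T c = 𝟙`. Hence `T ⦋n⦌ ≅ T ⦋0⦌` for all `n`, and `T` is constant on objects.
-/

open CategoryTheory Simplicial

namespace GES

open SimplexCategory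

theorem eq_self_of_leftInverse_of_cross_eq {α β : Type*} [LinearOrder α] [LinearOrder β]
    {u w : α → β} {r₀ r₁ : β → α} (hr₀ : Monotone r₀) (hr₁ : Monotone r₁)
    (hu : Function.LeftInverse r₀ u) (hw : Function.LeftInverse r₁ w)
    (h : ∀ x, r₁ (u x) = r₀ (w x)) (x : α) : r₁ (u x) = x := by
  -- `r₁` compares `u x` with `w x` one way and `r₀` the other way.
  rcases lt_trichotomy (r₁ (u x)) x with hlt | heq | hgt
  · have huw : u x < w x := hr₁.reflect_lt (by rwa [hw x])
    have hwu : w x < u x := hr₀.reflect_lt (by rwa [hu x, ← h x])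
    exact absurd huw hwu.asymm
  · exact heq
  · have hwu : w x < u x := hr₁.reflect_lt (by rwa [hw x])
    have huw : u x < w x := hr₀.reflect_lt (by rwa [hu x, ← h x])
    exact absurd huw hwu.asymm

theorem leftInverse_toOrderHom_of_comp_eq_id {X Y : SimplexCategory} {f : X ⟶ Y} {g : Y ⟶ X}
    (h : f ≫ g = 𝟙 X) : Function.LeftInverse g.toOrderHom f.toOrderHom :=
  congr_toOrderHom_apply h

theorem comp_eq_id_of_cross_eq {X Y : SimplexCategory} {u w : X ⟶ Y} {r₀ r₁ : Y ⟶ X}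
    (hu : u ≫ r₀ = 𝟙 X) (hw : w ≫ r₁ = 𝟙 X) (h : u ≫ r₁ = w ≫ r₀) : u ≫ r₁ = 𝟙 X :=
  Hom.ext _ _ <| OrderHom.ext _ _ <| funext fun x =>
    eq_self_of_leftInverse_of_cross_eq r₀.toOrderHom.monotone r₁.toOrderHom.monotone
      (leftInverse_toOrderHom_of_comp_eq_id hu) (leftInverse_toOrderHom_of_comp_eq_id hw)
      (congr_toOrderHom_apply h) x

theorem δ_one_comp_mkOfLe {n : ℕ} (a b : Fin (n + 1)) (h : a ≤ b) :
    δ 1 ≫ mkOfLe a b h = const ⦋0⦌ ⦋n⦌ a :=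
  Hom.ext_zero_left _ _

theorem δ_zero_comp_mkOfLe {n : ℕ} (a b : Fin (n + 1)) (h : a ≤ b) :
    δ 0 ≫ mkOfLe a b h = const ⦋0⦌ ⦋n⦌ b :=
  Hom.ext_zero_left _ _

theorem mkOfLe_comp_toMk₁ {n : ℕ} {a b : Fin (n + 1)} (h : a < b) :
    mkOfLe a b h.le ≫ toMk₁ b.castSucc = 𝟙 ⦋1⦌ :=
  Hom.ext_one_left _ _ (if_pos h) (if_neg (lt_irrefl _))

theorem exists_cross_retractions (n : ℕ) :
    ∃ (u w : ⦋n⦌ ⟶ ⦋n + n + 1⦌) (r₀ r₁ : ⦋n + n + 1⦌ ⟶ ⦋n⦌),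
      u ≫ r₀ = 𝟙 _ ∧ w ≫ r₁ = 𝟙 _ ∧ u ≫ r₁ = const _ _ 0 ∧ w ≫ r₀ = const _ _ (Fin.last n) := by
  refine ⟨mkHom ⟨fun i => ⟨i, by omega⟩, fun _ _ h => h⟩,
    mkHom ⟨fun i => ⟨i + n + 1, by omega⟩, fun _ _ h => by simpa using h⟩,
    mkHom ⟨fun j => ⟨min j n, by omega⟩, fun _ _ h => by simpa using min_le_min_right n h⟩,
    mkHom ⟨fun j => ⟨j - (n + 1), by omega⟩, fun _ _ h => by simpa using Nat.sub_le_sub_right h _⟩,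
    ?_, ?_, ?_, ?_⟩ <;> ext (i : Fin (n + 1))
  · change min (i : ℕ) n = i; omega
  · change (i : ℕ) + n + 1 - (n + 1) = i; omega
  · change (i : ℕ) - (n + 1) = 0; omega
  · change min ((i : ℕ) + n + 1) n = n; omega

section

variable (T : SimplexCategory ⥤ SimplexCategory)

theorem map_const_eq_of_map_δ_eq (h : T.map (δ 0 : ⦋0⦌ ⟶ ⦋1⦌) = T.map (δ 1)) {n : ℕ}
    (a b : Fin (n + 1)) : T.map (const ⦋0⦌ ⦋n⦌ a) = T.map (const ⦋0⦌ ⦋n⦌ b) := by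
  wlog hab : a ≤ b generalizing a b
  · exact (this b a (le_of_not_ge hab)).symm
  rw [← δ_one_comp_mkOfLe a b hab, ← δ_zero_comp_mkOfLe a b hab, T.map_comp, T.map_comp, h]

theorem obj_eq_obj_zero_of_map_const_eq {n : ℕ}
    (h : T.map (const ⦋0⦌ ⦋n⦌ 0) = T.map (const ⦋0⦌ ⦋n⦌ (Fin.last n))) :
    T.obj ⦋n⦌ = T.obj ⦋0⦌ := by
  obtain ⟨u, w, r₀, r₁, hu, hw, hu₁, hw₀⟩ := exists_cross_retractions n
  have hcross := comp_eq_id_of_cross_eq (u := T.map u) (w := T.map w)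
    (r₀ := T.map r₀) (r₁ := T.map r₁)
    (by rw [← T.map_comp, hu, T.map_id]) (by rw [← T.map_comp, hw, T.map_id])
    (by rw [← T.map_comp, ← T.map_comp, hu₁, hw₀, const_fac_thru_zero,
      const_fac_thru_zero ⦋n⦌ ⦋n⦌ (Fin.last n), T.map_comp, T.map_comp, h])
  rw [← T.map_comp, hu₁, const_fac_thru_zero, T.map_comp] at hcross
  exact skeletal ⟨Iso.mk _ _ hcross
    (by rw [← T.map_comp, const_comp, const_apply, const_eq_id, T.map_id])⟩

theorem injective_map_mkOfLe {n : ℕ} {a b : Fin (n + 1)} (h : a < b) :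
    Function.Injective (T.map (mkOfLe a b h.le)).toOrderHom :=
  (leftInverse_toOrderHom_of_comp_eq_id (g := T.map (toMk₁ b.castSucc))
    (by rw [← T.map_comp, mkOfLe_comp_toMk₁ h, T.map_id])).injective

theorem map_const_apply_ne_of_lt {e : Fin ((T.obj ⦋0⦌).len + 1)}
    (he : (T.map (δ 0 : ⦋0⦌ ⟶ ⦋1⦌)).toOrderHom e ≠ (T.map (δ 1)).toOrderHom e) {n : ℕ}
    {a b : Fin (n + 1)} (hab : a < b) :
    (T.map (const ⦋0⦌ ⦋n⦌ a)).toOrderHom e ≠ (T.map (const ⦋0⦌ ⦋n⦌ b)).toOrderHom e := by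
  rw [← δ_one_comp_mkOfLe a b hab.le, ← δ_zero_comp_mkOfLe a b hab.le, T.map_comp, T.map_comp]
  exact fun h => he ((injective_map_mkOfLe T hab) h).symm

theorem le_len_obj_of_map_δ_ne (h : T.map (δ 0 : ⦋0⦌ ⟶ ⦋1⦌) ≠ T.map (δ 1)) (k : ℕ) :
    k ≤ (T.obj ⦋k⦌).len := by
  obtain ⟨e, he⟩ : ∃ e, (T.map (δ 0 : ⦋0⦌ ⟶ ⦋1⦌)).toOrderHom e ≠ (T.map (δ 1)).toOrderHom e := by
    by_contra! h'
    exact h (Hom.ext _ _ (OrderHom.ext _ _ (funext h')))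
  have hinj :
      Function.Injective fun v : Fin (k + 1) => (T.map (const ⦋0⦌ ⦋k⦌ v)).toOrderHom e := by
    intro a b hab
    by_contra hne
    rcases Ne.lt_or_gt hne with hlt | hlt
    exacts [map_const_apply_ne_of_lt T he hlt hab, map_const_apply_ne_of_lt T he hlt hab.symm]
  simpa using Fintype.card_le_of_injective _ hinj

end

/-- If an endofunctor `T` of the simplex category is not constant on
objects, then for every `k` one has `k ≤ T(k)`, where `T([k]) = [T(k)]`; that is,
`T([k])` has at least `k + 1` elements. -/
theorem le_len_obj_of_not_constant (T : SimplexCategory ⥤ SimplexCategory)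
    (hT : ∃ X Y : SimplexCategory, T.obj X ≠ T.obj Y) :
    ∀ k : ℕ, k ≤ (T.obj (SimplexCategory.mk k)).len := by
  refine le_len_obj_of_map_δ_ne T fun hδ => ?_
  have hconst (n : ℕ) : T.obj ⦋n⦌ = T.obj ⦋0⦌ :=
    obj_eq_obj_zero_of_map_const_eq T (map_const_eq_of_map_δ_eq T hδ _ _)
  obtain ⟨X, Y, hXY⟩ := hT
  exact hXY (by rw [← mk_len X, ← mk_len Y, hconst X.len, hconst Y.len])

end GES
end

section
/- For every endofunctor T of the simplex category Δ and every k ≥ 2, the simplicial set T*(Δ¹) has no non-degenerate k-simplices: every element of T*(Δ¹)_k = Hom_Δ(T([k]),[1]) is in the image of some degeneracy map T*(Δ¹)_{k−1} → T*(Δ¹)_k. -/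
/-!
An element of `T*(Δ¹)_k` is a cut `φ : T⦋k⦌ ⟶ ⦋1⦌`. A nonconstant cut jumps at a single pair
`a ⋖ b`, and it factors through `T(σᵢ)` as soon as `T(σᵢ)` does not identify `a` and `b`. So it
suffices to see that no pair `a < b` of `T⦋m+2⦌` is identified by every `T(σᵢ)`, hence by `T(g)`
for every non-injective `g` out of `⦋m+2⦌`.

The maps `eₖ : ⦋m+2⦌ ⟶ ⦋m+4⦌` sending `0, 1, 2` to `0, k+1, 4` (`k = 0, 1, 2`) have common
retractions `r_{ij}` with `eₖ ≫ r_{ij} = 𝟙` for `i ≤ k ≤ j` and `eₖ ≫ r_{ij}` non-injective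
otherwise. After applying `T`, the pairs `(T eₖ a, T eₖ b)` bound three intervals of the linear
order `T⦋m+4⦌`, and the point where `T r_{ij}` reaches `b` lies in exactly those with
`i ≤ k ≤ j`. But three intervals of a line cannot realise the patterns `{0}, {1}, {2}, {0,1,2}`.
-/

open CategoryTheory Simplicial Topology

namespace GES

open SimplexCategory

theorem exists_covBy_not_and_of_lt {α : Type*} [LinearOrder α] [WellFoundedLT α]
    [IsStronglyCoatomic α] {P : α → Prop} {x y : α} (hxy : x < y) (hx : ¬P x) (hy : P y) :
    ∃ a b, a ⋖ b ∧ ¬P a ∧ P b := by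
  obtain ⟨b, ⟨hxb, hb⟩, hmin⟩ :=
    WellFounded.has_min wellFounded_lt {z | x < z ∧ P z} ⟨y, hxy, hy⟩
  obtain ⟨a, hxa, hab⟩ := exists_le_covBy_of_lt hxb
  refine ⟨a, b, hab, fun ha => ?_, hb⟩
  rcases hxa.eq_or_lt with rfl | hxa
  · exact hx ha
  · exact hmin a ⟨hxa, ha⟩ hab.lt

theorem exists_threshold_of_monotone {n : ℕ} {P : Fin n → Prop} (hP : Monotone P) :
    ∃ t : ℕ, ∀ y, P y ↔ t ≤ y.val := by
  classical
  have hex : ∃ t, ∀ h : t < n, P ⟨t, h⟩ := ⟨n, fun h => absurd h (lt_irrefl n)⟩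
  refine ⟨Nat.find hex, fun y => ⟨fun hy => Nat.find_min' hex fun _ => hy, fun hty => ?_⟩⟩
  exact hP (show (⟨_, hty.trans_lt y.isLt⟩ : Fin n) ≤ y from hty) (Nat.find_spec hex _)

/- If the point `t₁` of pattern `{1}` lies left of the point `t` of pattern `{0,1,2}`, the points
`t₀` and `t₂` lie right of `t`, and the smaller of them is in both `Ioc (A 0) (B 0)` and
`Ioc (A 2) (B 2)`. -/
theorem not_forall_exists_mem_Ioc_iff_mem_Icc (A B : Fin 3 → ℕ) :
    ¬ ∀ i j : Fin 3, ∃ t, ∀ k, t ∈ Set.Ioc (A k) (B k) ↔ k ∈ Set.Icc i j := by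
  intro h
  obtain ⟨t₀, h₀⟩ := h 0 0
  obtain ⟨t₁, h₁⟩ := h 1 1
  obtain ⟨t₂, h₂⟩ := h 2 2
  obtain ⟨t, ht⟩ := h 0 2
  simp only [Fin.forall_fin_succ, Fin.succ_zero_eq_one, Fin.succ_one_eq_two,
    IsEmpty.forall_iff, Fin.reduceLE, Set.mem_Ioc, Set.mem_Icc, and_true, and_false, iff_true,
    iff_false] at h₀ h₁ h₂ ht
  omega

def doubleCoface (m : ℕ) (k : Fin 3) : ⦋m + 2⦌ ⟶ ⦋m + 4⦌ :=
  mkHom ⟨fun x => ⟨if x.val = 0 then 0 else if x.val = 1 then k.val + 1 else x.val + 2,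
      by split_ifs <;> omega⟩,
    fun x y hxy => by
      rw [Fin.le_def] at hxy
      simp only [Fin.mk_le_mk]
      split_ifs <;> omega⟩

def blockCollapse (m : ℕ) (i j : Fin 3) : ⦋m + 4⦌ ⟶ ⦋m + 2⦌ :=
  mkHom ⟨fun y => ⟨if y.val ≤ i.val then 0 else if y.val ≤ j.val + 1 then 1
      else if y.val ≤ 4 then 2 else y.val - 2, by split_ifs <;> omega⟩,
    fun x y hxy => by
      rw [Fin.le_def] at hxy
      simp only [Fin.mk_le_mk]
      split_ifs <;> omega⟩

theorem doubleCoface_apply_val (m : ℕ) (k : Fin 3) (x : Fin (m + 3)) :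
    ((doubleCoface m k).toOrderHom x).val =
      if x.val = 0 then 0 else if x.val = 1 then k.val + 1 else x.val + 2 := rfl

theorem blockCollapse_apply_val (m : ℕ) (i j : Fin 3) (y : Fin (m + 5)) :
    ((blockCollapse m i j).toOrderHom y).val =
      if y.val ≤ i.val then 0 else if y.val ≤ j.val + 1 then 1
      else if y.val ≤ 4 then 2 else y.val - 2 := rfl

theorem doubleCoface_comp_blockCollapse (m : ℕ) {i j k : Fin 3} (hk : k ∈ Set.Icc i j) :
    doubleCoface m k ≫ blockCollapse m i j = 𝟙 _ := by
  ext x : 3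
  apply Fin.ext
  rw [Set.mem_Icc, Fin.le_def, Fin.le_def] at hk
  simp only [comp_toOrderHom, OrderHom.comp_coe, Function.comp_apply, id_toOrderHom,
    OrderHom.id_coe, id_eq, blockCollapse_apply_val, doubleCoface_apply_val]
  split_ifs <;> omega

theorem not_injective_doubleCoface_comp_blockCollapse (m : ℕ) {i j k : Fin 3}
    (hk : k ∉ Set.Icc i j) :
    ¬ Function.Injective (doubleCoface m k ≫ blockCollapse m i j).toOrderHom := by
  rw [Function.not_injective_iff]
  simp only [comp_toOrderHom, OrderHom.comp_coe, Function.comp_apply, Fin.ext_iff,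
    blockCollapse_apply_val, doubleCoface_apply_val]
  rw [Set.mem_Icc, Fin.le_def, Fin.le_def] at hk
  by_cases hik : i.val ≤ k.val
  · exact ⟨⟨1, by simp⟩, ⟨2, by simp⟩, by dsimp only; split_ifs <;> omega, by simp⟩
  · exact ⟨⟨0, by simp⟩, ⟨1, by simp⟩, by dsimp only; split_ifs <;> omega, by simp⟩

theorem exists_eq_comp_of_covBy {X Y : SimplexCategory} (φ : X ⟶ ⦋1⦌) (g : X ⟶ Y)
    {a b : Fin (X.len + 1)} (hab : a ⋖ b) (ha : φ.toOrderHom a ≠ 1) (hb : φ.toOrderHom b = 1)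
    (hg : g.toOrderHom a ≠ g.toOrderHom b) : ∃ w : Y ⟶ ⦋1⦌, φ = g ≫ w := by
  let c := g.toOrderHom b
  have hmono : Monotone fun y => if c ≤ y then (1 : Fin (⦋1⦌.len + 1)) else 0 := by
    intro y y' hyy'
    dsimp only
    split_ifs with hy hy'
    exacts [le_rfl, absurd (hy.trans hyy') hy', Fin.zero_le _, le_rfl]
  refine ⟨Hom.mk ⟨_, hmono⟩, ?_⟩
  ext x : 3
  show φ.toOrderHom x = if c ≤ g.toOrderHom x then 1 else 0
  by_cases hbx : b ≤ x
  · rw [if_pos (g.toOrderHom.monotone hbx)]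
    have := φ.toOrderHom.monotone hbx
    rw [hb] at this
    exact le_antisymm (Fin.le_last _) this
  · have hxa : x ≤ a := hab.le_of_lt (not_le.mp hbx)
    rw [if_neg fun h => hg (le_antisymm (g.toOrderHom.monotone hab.le)
      (h.trans (g.toOrderHom.monotone hxa)))]
    have := φ.toOrderHom.monotone hxa
    lia

section

variable (T : SimplexCategory ⥤ SimplexCategory)

theorem map_apply_eq_of_not_injective {n : ℕ} {a b : Fin ((T.obj ⦋n + 1⦌).len + 1)}
    (h : ∀ i : Fin (n + 1), (T.map (σ i)).toOrderHom a = (T.map (σ i)).toOrderHom b)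
    {Z : SimplexCategory} (g : ⦋n + 1⦌ ⟶ Z) (hg : ¬ Function.Injective g.toOrderHom) :
    (T.map g).toOrderHom a = (T.map g).toOrderHom b := by
  obtain ⟨i, g, rfl⟩ := eq_σ_comp_of_not_injective g hg
  simp only [T.map_comp, comp_toOrderHom, OrderHom.comp_coe, Function.comp_apply, h i]

theorem exists_map_σ_apply_ne {m : ℕ} {a b : Fin ((T.obj ⦋m + 2⦌).len + 1)} (hab : a < b) :
    ∃ i : Fin (m + 2), (T.map (σ i)).toOrderHom a ≠ (T.map (σ i)).toOrderHom b := by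
  by_contra! hσ
  refine not_forall_exists_mem_Ioc_iff_mem_Icc
    (fun k => ((T.map (doubleCoface m k)).toOrderHom a).val)
    (fun k => ((T.map (doubleCoface m k)).toOrderHom b).val) fun i j => ?_
  set r := (T.map (blockCollapse m i j)).toOrderHom
  obtain ⟨t, ht⟩ := exists_threshold_of_monotone (P := fun y => b ≤ r y)
    fun y y' hyy' => le_trans' (r.monotone hyy')
  refine ⟨t, fun k => ?_⟩
  set e := (T.map (doubleCoface m k)).toOrderHom
  have hsep : t ∈ Set.Ioc (e a).val (e b).val ↔ ¬ b ≤ r (e a) ∧ b ≤ r (e b) := by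
    rw [ht, ht, Set.mem_Ioc, not_le]
  rw [hsep]
  by_cases hk : k ∈ Set.Icc i j
  · have hre (x) : r (e x) = x := by
      have hid := T.congr_map (doubleCoface_comp_blockCollapse m hk)
      simpa [r, e] using congr(Hom.toOrderHom $hid x)
    simp [hre, hab, hk]
  · have hcol := map_apply_eq_of_not_injective T hσ _
      (not_injective_doubleCoface_comp_blockCollapse m hk)
    simp only [T.map_comp, comp_toOrderHom, OrderHom.comp_coe, Function.comp_apply] at hcol
    simp [r, e, hcol, hk]

theorem exists_eq_map_σ_comp {m : ℕ} (φ : T.obj ⦋m + 2⦌ ⟶ ⦋1⦌) :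
    ∃ (i : Fin (m + 2)) (w : T.obj ⦋m + 1⦌ ⟶ ⦋1⦌), φ = T.map (σ i) ≫ w := by
  by_cases hconst : ∀ x, φ.toOrderHom x = φ.toOrderHom 0
  · exact ⟨0, const _ _ (φ.toOrderHom 0), by ext x : 3; exact hconst x⟩
  push Not at hconst
  obtain ⟨x, hx⟩ := hconst
  have hle := φ.toOrderHom.monotone (Fin.zero_le x)
  have hφ0 : φ.toOrderHom 0 ≠ 1 := by lia
  have hφx : φ.toOrderHom x = 1 := by lia
  have h0x : 0 < x := (Fin.zero_le x).lt_of_ne fun h => hx (h ▸ rfl)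
  obtain ⟨a, b, hab, ha, hb⟩ :=
    exists_covBy_not_and_of_lt (P := fun z => φ.toOrderHom z = 1) h0x hφ0 hφx
  obtain ⟨i, hi⟩ := exists_map_σ_apply_ne T hab.lt
  exact ⟨i, exists_eq_comp_of_covBy φ (T.map (σ i)) hab ha hb hi⟩

end

/-- For every endofunctor `T` of the simplex category and every
`k = m + 2 ≥ 2`, the simplicial set `T*(Δ¹)` has no non-degenerate `k`-simplices: every
`k`-simplex is in the image of some degeneracy map `T*(Δ¹)_{k-1} → T*(Δ¹)_k`. -/
theorem star_standardSimplex_one_degenerate (T : SimplexCategory ⥤ SimplexCategory)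
    (m : ℕ) (x : (star T Δ[1]).obj (Opposite.op (SimplexCategory.mk (m + 2)))) :
    ∃ (i : Fin (m + 2)) (y : (star T Δ[1]).obj (Opposite.op (SimplexCategory.mk (m + 1)))),
      x = (star T Δ[1]).map (SimplexCategory.σ i).op y := by
  obtain ⟨i, w, hw⟩ := exists_eq_map_σ_comp T (SSet.stdSimplex.objEquiv x)
  refine ⟨i, SSet.stdSimplex.objEquiv.symm w, ?_⟩
  rw [← SSet.stdSimplex.objEquiv.symm_apply_apply x, hw]
  exact (SSet.stdSimplex.map_objEquiv_symm _ _).symm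

end GES
end

section
/- The only endofunctors T of the simplex category Δ satisfying T([0]) = [0] are the three basis functors: T = Id, or T = C₀, or T = Op. -/
open CategoryTheory Simplicial Topology

namespace GES

def opHom {X Y : SimplexCategory} (f : X ⟶ Y) : Fin (X.len + 1) →o Fin (Y.len + 1) where
  toFun k := ⟨Y.len - f.toOrderHom ⟨X.len - (k : ℕ), by omega⟩, by omega⟩
  monotone' := by
    intro a b hab
    refine Fin.mk_le_mk.mpr ?_
    have h1 : (⟨X.len - (b : ℕ), by omega⟩ : Fin (X.len + 1)) ≤ ⟨X.len - (a : ℕ), by omega⟩ :=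
      Fin.mk_le_mk.mpr (by have : (a : ℕ) ≤ b := hab; omega)
    exact Nat.sub_le_sub_left (f.toOrderHom.monotone h1) Y.len

theorem opHom_val {X Y : SimplexCategory} (f : X ⟶ Y) (k : Fin (X.len + 1)) :
    (opHom f k : ℕ) = Y.len - f.toOrderHom ⟨X.len - (k : ℕ), by omega⟩ := rfl

/-- The opposite endofunctor of the simplex category. -/
def opFunctor : SimplexCategory ⥤ SimplexCategory where
  obj X := X
  map f := SimplexCategory.Hom.mk (opHom f)
  map_id X := by
    apply SimplexCategory.Hom.ext
    rw [SimplexCategory.id_toOrderHom]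
    ext k
    rw [SimplexCategory.Hom.toOrderHom_mk]
    have hk : (k : ℕ) < X.len + 1 := k.isLt
    rw [opHom_val]
    rw [SimplexCategory.id_toOrderHom]
    show X.len - (X.len - (k : ℕ)) = (k : ℕ)
    omega
  map_comp {X Y Z} f g := by
    apply SimplexCategory.Hom.ext
    rw [SimplexCategory.comp_toOrderHom]
    ext k
    rw [SimplexCategory.Hom.toOrderHom_mk]
    show (opHom (f ≫ g) k : ℕ) = (opHom g (opHom f k) : ℕ)
    rw [opHom_val (f ≫ g), opHom_val g, SimplexCategory.comp_toOrderHom]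
    show _ = Z.len - (g.toOrderHom ⟨Y.len - (Y.len -
      (f.toOrderHom ⟨X.len - (k : ℕ), by omega⟩ : ℕ)), by omega⟩ : ℕ)
    have hk : (k : ℕ) < X.len + 1 := k.isLt
    have e1 : g.toOrderHom (⟨Y.len - (Y.len -
          (f.toOrderHom ⟨X.len - (k : ℕ), by omega⟩ : ℕ)), by omega⟩ : Fin (Y.len + 1)) =
        g.toOrderHom (f.toOrderHom ⟨X.len - (k : ℕ), by omega⟩) :=
      congrArg _ (Fin.ext (by
        show Y.len - (Y.len - (f.toOrderHom ⟨X.len - (k : ℕ), by omega⟩ : ℕ)) = _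
        have := (f.toOrderHom ⟨X.len - (k : ℕ), by omega⟩).isLt
        omega))
    have e2 := congrArg Fin.val e1
    show Z.len - ((g.toOrderHom ∘ f.toOrderHom) ⟨X.len - (k : ℕ), by omega⟩ : ℕ) = _
    simp only [Function.comp_apply]
    omega

/-- The constant endofunctor of the simplex category at `[0]`. -/
def constFunctor : SimplexCategory ⥤ SimplexCategory :=
  (CategoryTheory.Functor.const SimplexCategory).obj (SimplexCategory.mk 0)

/-!
For `T` with `T[0] = [0]`, the images of the vertices `[0] ⟶ [n]` form a map
`φₙ = point T ⦋n⦌ : [n] → T[n]`, natural in `[n]`. Comparing an element `T(δ_{j+1}) r` with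
`φₙ₊₁(j+1)` and applying the two retractions `σ_j`, `σ_{j+1}` shows that no `r ∈ T[n]` lies
strictly between `φₙ(j)` and `φₙ(j+1)`; the same trick with the two halves of `[2n]` puts every
`r` between `φₙ(0)` and `φₙ(n)`. Hence `φₙ` is surjective. Threshold maps `[n] ⟶ [1]` and edges
`[1] ⟶ [n]` propagate the comparison of `φ₁(0)` with `φ₁(1)`: if `φ₁(0) < φ₁(1)` every `φₙ` is
an order isomorphism and `T = Id`; if they are equal every `T[n]` is a point and `T = C₀`;
otherwise `T ⋙ Op = Id`.
-/

theorem Fin.exists_apply_eq_of_mem_uIcc {α : Type*} [LinearOrder α] {n : ℕ}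
    (f : Fin (n + 1) → α) {r : α} (hr : r ∈ Set.uIcc (f 0) (f (Fin.last n)))
    (hstep : ∀ j : Fin n, r ∉ Set.uIoo (f j.castSucc) (f j.succ)) : ∃ i, f i = r := by
  induction n with
  | zero =>
    rw [Fin.last_zero, Set.uIcc_self] at hr
    exact ⟨0, hr.symm⟩
  | succ n ih =>
    rcases Set.uIcc_subset_uIcc_union_uIcc hr with hr | hr
    · obtain ⟨i, hi⟩ := ih (f ∘ Fin.castSucc) hr (fun j => hstep j.castSucc)
      exact ⟨i.castSucc, hi⟩
    · rw [← Fin.succ_last] at hr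
      by_cases h₁ : f (Fin.last n).castSucc = r
      · exact ⟨_, h₁⟩
      by_cases h₂ : f (Fin.last n).succ = r
      · exact ⟨_, h₂⟩
      refine absurd ?_ (hstep (Fin.last n))
      rcases Set.mem_uIcc.mp hr with ⟨hl, hu⟩ | ⟨hl, hu⟩
      · exact Set.mem_uIoo_of_lt (hl.lt_of_ne h₁) (hu.lt_of_ne' h₂)
      · exact Set.mem_uIoo_of_gt (hl.lt_of_ne h₂) (hu.lt_of_ne' h₁)

theorem Monotone.le_and_le_or_le_and_le {α β γ : Type*} [LinearOrder α] [Preorder β]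
    [Preorder γ] {f : α → β} {g : α → γ} (hf : Monotone f) (hg : Monotone g) (x y : α) :
    (f x ≤ f y ∧ g x ≤ g y) ∨ (f y ≤ f x ∧ g y ≤ g x) :=
  (le_total x y).imp (fun h => ⟨hf h, hg h⟩) (fun h => ⟨hf h, hg h⟩)

open SimplexCategory

lemma endofunctor_ext {F G : SimplexCategory ⥤ SimplexCategory} (hobj : ∀ X, F.obj X = G.obj X)
    (hmap : ∀ {X Y : SimplexCategory} (f : X ⟶ Y) (k : Fin ((F.obj X).len + 1)),
      ((F.map f).toOrderHom k : ℕ) = (G.map f).toOrderHom (Fin.cast (by rw [hobj]) k)) :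
    F = G := by
  refine CategoryTheory.Functor.ext hobj fun X Y f => ?_
  ext k : 3
  apply Fin.ext
  simp [hmap]

lemma opFunctor_eq_rev : opFunctor = rev :=
  endofunctor_ext (fun _ => rfl) fun {X Y} f k => by
    rw [rev_map_apply, Fin.val_rev,
      show (Fin.cast _ k).rev = ⟨X.len - k, Nat.sub_lt_succ _ _⟩ from Fin.ext (by simp)]
    show Y.len - _ = Y.len + 1 - (_ + 1)
    omega

lemma rev_comp_rev : rev ⋙ rev = 𝟭 SimplexCategory :=
  CategoryTheory.Functor.ext (fun _ => rfl) fun _ _ f => by simp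

def collapseUpper (n : ℕ) : ⦋n + n⦌ ⟶ ⦋n⦌ :=
  mkHom ⟨fun x => ⟨min x n, by omega⟩, fun _ _ h => by simpa using min_le_min_right n h⟩

def collapseLower (n : ℕ) : ⦋n + n⦌ ⟶ ⦋n⦌ :=
  mkHom ⟨fun x => ⟨x - n, by omega⟩, fun _ _ h => Fin.mk_le_mk.mpr (Nat.sub_le_sub_right h n)⟩

lemma subinterval_comp_collapseUpper (n : ℕ) :
    subinterval 0 n (by omega) ≫ collapseUpper n = 𝟙 ⦋n⦌ := by
  ext i : 3
  have : (i : ℕ) < n + 1 := i.isLt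
  exact Fin.ext (show min ((i : ℕ) + 0) n = i by omega)

lemma subinterval_comp_collapseLower (n : ℕ) :
    subinterval n n le_rfl ≫ collapseLower n = 𝟙 ⦋n⦌ := by
  ext i : 3
  exact Fin.ext (show (i : ℕ) + n - n = i by omega)

lemma subinterval_comp_collapseUpper_eq_const (n : ℕ) :
    subinterval n n le_rfl ≫ collapseUpper n = const ⦋n⦌ ⦋n⦌ (Fin.last n) := by
  ext i : 3
  exact Fin.ext (show min ((i : ℕ) + n) n = n by omega)

lemma subinterval_comp_collapseLower_eq_const (n : ℕ) :
    subinterval 0 n (by omega) ≫ collapseLower n = const ⦋n⦌ ⦋n⦌ 0 := by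
  ext i : 3
  have : (i : ℕ) < n + 1 := i.isLt
  exact Fin.ext (show (i : ℕ) + 0 - n = 0 by omega)

section

variable (T : SimplexCategory ⥤ SimplexCategory)

def point (X : SimplexCategory) (i : Fin (X.len + 1)) : Fin ((T.obj X).len + 1) :=
  (T.map (const ⦋0⦌ X i)).toOrderHom 0

lemma map_point {X Y : SimplexCategory} (f : X ⟶ Y) (i : Fin (X.len + 1)) :
    (T.map f).toOrderHom (point T X i) = point T Y (f.toOrderHom i) := by
  rw [point, point, ← const_comp, T.map_comp]
  rfl

lemma map_map_apply {X Y Z : SimplexCategory} (f : X ⟶ Y) (g : Y ⟶ Z)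
    (r : Fin ((T.obj X).len + 1)) :
    (T.map g).toOrderHom ((T.map f).toOrderHom r) = (T.map (f ≫ g)).toOrderHom r := by
  rw [T.map_comp]
  rfl

lemma map_map_apply_of_comp_eq {X Y : SimplexCategory} {f : X ⟶ Y} {g : Y ⟶ X}
    (hfg : f ≫ g = 𝟙 X) (r : Fin ((T.obj X).len + 1)) :
    (T.map g).toOrderHom ((T.map f).toOrderHom r) = r := by
  rw [map_map_apply, hfg, T.map_id]
  rfl

lemma point_notMem_uIoo {n : ℕ} (j : Fin n) (r : Fin ((T.obj ⦋n⦌).len + 1)) :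
    r ∉ Set.uIoo (point T ⦋n⦌ j.castSucc) (point T ⦋n⦌ j.succ) := by
  have hcastSucc : (T.map (σ j.castSucc)).toOrderHom (point T ⦋n + 1⦌ j.castSucc.succ) =
      point T ⦋n⦌ j.castSucc := by
    rw [map_point]
    simp [σ]
  have hsucc : (T.map (σ j.succ)).toOrderHom (point T ⦋n + 1⦌ j.castSucc.succ) =
      point T ⦋n⦌ j.succ := by
    rw [map_point, Fin.succ_castSucc]
    simp [σ]
  have hret₁ := map_map_apply_of_comp_eq T (δ_comp_σ_succ (i := j.castSucc)) r
  have hret₂ := map_map_apply_of_comp_eq T (δ_comp_σ_self' (Fin.succ_castSucc j)) r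
  intro hr
  rcases Monotone.le_and_le_or_le_and_le (T.map (σ j.castSucc)).toOrderHom.monotone
    (T.map (σ j.succ)).toOrderHom.monotone ((T.map (δ j.castSucc.succ)).toOrderHom r)
    (point T _ j.castSucc.succ) with ⟨h₁, h₂⟩ | ⟨h₁, h₂⟩ <;>
    rw [hret₁, hcastSucc] at h₁ <;> rw [hret₂, hsucc] at h₂
  · exact hr.1.not_ge (le_inf h₁ h₂)
  · exact hr.2.not_ge (sup_le h₁ h₂)

variable {T}

lemma point_strictMono (hlt : point T ⦋1⦌ 0 < point T ⦋1⦌ 1) (X : SimplexCategory) :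
    StrictMono (point T X) := by
  intro i j hij
  by_contra! hle
  have := (T.map (toMk₁ (n := X.len) j.castSucc)).toOrderHom.monotone hle
  have h₀ : (toMk₁ j.castSucc).toOrderHom i = 0 :=
    toMk₁_of_castSucc_lt _ _ (Fin.castSucc_lt_castSucc_iff.mpr hij)
  have h₁ : (toMk₁ j.castSucc).toOrderHom j = 1 := toMk₁_of_le_castSucc _ _ le_rfl
  rw [map_point, map_point, h₀, h₁] at this
  exact hlt.not_ge this

lemma point_eq_point_zero (heq : point T ⦋1⦌ 0 = point T ⦋1⦌ 1) {n : ℕ} (i : Fin (n + 1)) :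
    point T ⦋n⦌ i = point T ⦋n⦌ 0 := by
  have h₀ := map_point T (mkOfLe 0 i (Fin.zero_le i)) 0
  have h₁ := map_point T (mkOfLe 0 i (Fin.zero_le i)) 1
  rw [heq] at h₀
  exact h₁.symm.trans h₀

lemma map_const_apply (h : T.obj ⦋0⦌ = ⦋0⦌) (X Y : SimplexCategory) (i : Fin (Y.len + 1))
    (r : Fin ((T.obj X).len + 1)) :
    (T.map (const X Y i)).toOrderHom r = point T Y i := by
  have : Subsingleton (Fin ((T.obj ⦋0⦌).len + 1)) := by
    rw [h]; exact inferInstanceAs (Subsingleton (Fin 1))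
  rw [const_fac_thru_zero, ← map_map_apply, point,
    Subsingleton.elim ((T.map (const X ⦋0⦌ 0)).toOrderHom r) 0]

lemma mem_uIcc_point_zero_point_last (h : T.obj ⦋0⦌ = ⦋0⦌) (n : ℕ)
    (r : Fin ((T.obj ⦋n⦌).len + 1)) :
    r ∈ Set.uIcc (point T ⦋n⦌ 0) (point T ⦋n⦌ (Fin.last n)) := by
  have hupper₁ := map_map_apply_of_comp_eq T (subinterval_comp_collapseUpper n) r
  have hlower₂ := map_map_apply_of_comp_eq T (subinterval_comp_collapseLower n) r
  have hupper₂ : (T.map (collapseUpper n)).toOrderHom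
      ((T.map (subinterval n n le_rfl)).toOrderHom r) = point T ⦋n⦌ (Fin.last n) := by
    rw [map_map_apply, subinterval_comp_collapseUpper_eq_const, map_const_apply h]
  have hlower₁ : (T.map (collapseLower n)).toOrderHom
      ((T.map (subinterval 0 n (by omega))).toOrderHom r) = point T ⦋n⦌ 0 := by
    rw [map_map_apply, subinterval_comp_collapseLower_eq_const, map_const_apply h]
  rcases Monotone.le_and_le_or_le_and_le (T.map (collapseUpper n)).toOrderHom.monotone
    (T.map (collapseLower n)).toOrderHom.monotone
    ((T.map (subinterval 0 n (by omega))).toOrderHom r)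
    ((T.map (subinterval n n le_rfl)).toOrderHom r) with ⟨h₁, h₂⟩ | ⟨h₁, h₂⟩ <;>
    rw [hupper₁, hupper₂] at h₁ <;> rw [hlower₁, hlower₂] at h₂
  · exact Set.mem_uIcc.mpr (.inl ⟨h₂, h₁⟩)
  · exact Set.mem_uIcc.mpr (.inr ⟨h₁, h₂⟩)

lemma point_surjective (h : T.obj ⦋0⦌ = ⦋0⦌) (n : ℕ) : Function.Surjective (point T ⦋n⦌) :=
  fun r => Fin.exists_apply_eq_of_mem_uIcc _ (mem_uIcc_point_zero_point_last h n r)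
    fun j => point_notMem_uIoo T j r

lemma eq_id_of_point_lt (h : T.obj ⦋0⦌ = ⦋0⦌)
    (hlt : point T ⦋1⦌ 0 < point T ⦋1⦌ 1) : T = 𝟭 SimplexCategory := by
  have hval : ∀ X i, (point T X i : ℕ) = i := fun X => Fin.coe_orderIso_apply
    ((point_strictMono hlt X).orderIsoOfSurjective _ (point_surjective h X.len))
  have hlen : ∀ X, (T.obj X).len = X.len := fun X => by
    have := Fin.equiv_iff_eq.mp
      ⟨.ofBijective _ ⟨(point_strictMono hlt X).injective, point_surjective h X.len⟩⟩
    omega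
  refine endofunctor_ext (fun X => SimplexCategory.ext (hlen X)) fun {X Y} f k => ?_
  obtain ⟨i, rfl⟩ := point_surjective h X.len k
  rw [map_point, hval, show Fin.cast _ (point T X i) = i from Fin.ext (hval X i)]
  rfl

lemma eq_constFunctor_of_point_eq (h : T.obj ⦋0⦌ = ⦋0⦌)
    (heq : point T ⦋1⦌ 0 = point T ⦋1⦌ 1) : T = constFunctor := by
  have hlen : ∀ X, (T.obj X).len = 0 := fun X => by
    obtain ⟨i, hi⟩ := point_surjective h X.len (Fin.last _)
    obtain ⟨i', hi'⟩ := point_surjective h X.len 0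
    rw [point_eq_point_zero heq] at hi hi'
    simpa using congrArg Fin.val (hi.symm.trans hi')
  refine endofunctor_ext (fun X => SimplexCategory.ext (hlen X)) fun {X Y} f k => ?_
  have := ((T.map f).toOrderHom k).isLt
  have := k.isLt
  have := hlen X; have := hlen Y
  show _ = (k : ℕ)
  omega

lemma eq_rev_of_point_gt (h : T.obj ⦋0⦌ = ⦋0⦌)
    (hgt : point T ⦋1⦌ 1 < point T ⦋1⦌ 0) : T = rev := by
  have hpoint : ∀ X i, point (T ⋙ rev) X i = (point T X i).rev := fun X i =>
    congrArg Fin.rev (map_const_apply h ⦋0⦌ X i _)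
  have hid : T ⋙ rev = 𝟭 SimplexCategory :=
    eq_id_of_point_lt h (by rw [hpoint, hpoint]; exact Fin.rev_lt_rev.mpr hgt)
  calc T = T ⋙ rev ⋙ rev := by rw [rev_comp_rev, Functor.comp_id]
    _ = rev := by rw [← Functor.assoc, hid, Functor.id_comp]

end

/-- The only endofunctors of the simplex category sending `[0]` to
`[0]` are the three basis functors `Id`, `C₀` and `Op`. -/
theorem eq_basis_of_obj_zero_eq_zero (T : SimplexCategory ⥤ SimplexCategory)
    (h : T.obj (SimplexCategory.mk 0) = SimplexCategory.mk 0) :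
    T = 𝟭 SimplexCategory ∨ T = constFunctor ∨ T = opFunctor := by
  rcases lt_trichotomy (point T ⦋1⦌ 0) (point T ⦋1⦌ 1) with hlt | heq | hgt
  · exact .inl (eq_id_of_point_lt h hlt)
  · exact .inr (.inl (eq_constFunctor_of_point_eq h heq))
  · exact .inr (.inr (opFunctor_eq_rev ▸ eq_rev_of_point_gt h hgt))
end GES
end
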